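/- arXiv:1611.03634 — 3 statements merged into one kernel-verified Lean document; each statement's English description precedes it below -/
import Mathlib

section
/- For any real numbers T3, T4, T6, the bilinear bracket on ℝ⁴ with basis X1, X2, X3, X4 defined by [X1,X2] = X3, [X1,X3] = X4, [X1,X4] = T3·X3, [X2,X3] = T6·X1 + T4·X2, [X2,X4] = T4·X3, [X3,X4] = −T6·T3·X1 − T4·T3·X2 + T4·X4 (extended bilinearly and antisymmetrically) satisfies the Jacobi identity, and hence defines a 4-dimensional Lie algebra. -/
/-- The "upper triangular" structure constants of the type III Engel family:
`engelE T3 T4 T6 i j k` is the coefficient of `X_k` in `[X_i, X_j]` for `i < j`. -/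
def engelE (T3 T4 T6 : ℝ) (i j k : Fin 4) : ℝ :=
  if i = 0 ∧ j = 1 ∧ k = 2 then 1
  else if i = 0 ∧ j = 2 ∧ k = 3 then 1
  else if i = 0 ∧ j = 3 ∧ k = 2 then T3
  else if i = 1 ∧ j = 2 ∧ k = 0 then T6
  else if i = 1 ∧ j = 2 ∧ k = 1 then T4
  else if i = 1 ∧ j = 3 ∧ k = 2 then T4
  else if i = 2 ∧ j = 3 ∧ k = 0 then -(T6 * T3)
  else if i = 2 ∧ j = 3 ∧ k = 1 then -(T4 * T3)
  else if i = 2 ∧ j = 3 ∧ k = 3 then T4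
  else 0

/-- Antisymmetrized structure constants. -/
def engelC (T3 T4 T6 : ℝ) (i j k : Fin 4) : ℝ :=
  engelE T3 T4 T6 i j k - engelE T3 T4 T6 j i k

/-- The bilinear extension of the bracket to all of `ℝ⁴`. -/
def engelBr (T3 T4 T6 : ℝ) (v w : Fin 4 → ℝ) : Fin 4 → ℝ :=
  fun k => ∑ i : Fin 4, ∑ j : Fin 4, v i * w j * engelC T3 T4 T6 i j k

lemma engelBr_apply0 (T3 T4 T6 : ℝ) (v w : Fin 4 → ℝ) :
    engelBr T3 T4 T6 v w 0 =
      T6 * (v 1 * w 2 - v 2 * w 1) - T6*T3 * (v 2 * w 3 - v 3 * w 2) := by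
  simp [engelBr, engelC, engelE, Fin.sum_univ_four]; ring

lemma engelBr_apply1 (T3 T4 T6 : ℝ) (v w : Fin 4 → ℝ) :
    engelBr T3 T4 T6 v w 1 =
      T4 * (v 1 * w 2 - v 2 * w 1) - T4*T3 * (v 2 * w 3 - v 3 * w 2) := by
  simp [engelBr, engelC, engelE, Fin.sum_univ_four]; ring

lemma engelBr_apply2 (T3 T4 T6 : ℝ) (v w : Fin 4 → ℝ) :
    engelBr T3 T4 T6 v w 2 =
      (v 0 * w 1 - v 1 * w 0) + T3 * (v 0 * w 3 - v 3 * w 0) + T4 * (v 1 * w 3 - v 3 * w 1) := by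
  simp [engelBr, engelC, engelE, Fin.sum_univ_four]; ring

lemma engelBr_apply3 (T3 T4 T6 : ℝ) (v w : Fin 4 → ℝ) :
    engelBr T3 T4 T6 v w 3 =
      (v 0 * w 2 - v 2 * w 0) + T4 * (v 2 * w 3 - v 3 * w 2) := by
  simp [engelBr, engelC, engelE, Fin.sum_univ_four]; ring

lemma engel_jac (T3 T4 T6 : ℝ) (u v w : Fin 4 → ℝ) (k : Fin 4) :
    engelBr T3 T4 T6 u (engelBr T3 T4 T6 v w) k
      = engelBr T3 T4 T6 (engelBr T3 T4 T6 u v) w k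
        + engelBr T3 T4 T6 v (engelBr T3 T4 T6 u w) k := by
  match k with
  | 0 => simp only [engelBr_apply0, engelBr_apply1, engelBr_apply2, engelBr_apply3]; ring
  | 1 => simp only [engelBr_apply0, engelBr_apply1, engelBr_apply2, engelBr_apply3]; ring
  | 2 => simp only [engelBr_apply0, engelBr_apply1, engelBr_apply2, engelBr_apply3]; ring
  | 3 => simp only [engelBr_apply0, engelBr_apply1, engelBr_apply2, engelBr_apply3]; ring

theorem engel_type_III_bracket_is_lie_algebra (T3 T4 T6 : ℝ) :
    (engelBr T3 T4 T6 ((Pi.single 0 1 : Fin 4 → ℝ)) ((Pi.single 1 1 : Fin 4 → ℝ)) = (Pi.single 2 1 : Fin 4 → ℝ)) ∧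
    (engelBr T3 T4 T6 ((Pi.single 0 1 : Fin 4 → ℝ)) ((Pi.single 2 1 : Fin 4 → ℝ)) = (Pi.single 3 1 : Fin 4 → ℝ)) ∧
    (engelBr T3 T4 T6 ((Pi.single 0 1 : Fin 4 → ℝ)) ((Pi.single 3 1 : Fin 4 → ℝ)) = T3 • (Pi.single 2 1 : Fin 4 → ℝ)) ∧
    (engelBr T3 T4 T6 ((Pi.single 1 1 : Fin 4 → ℝ)) ((Pi.single 2 1 : Fin 4 → ℝ))
      = T6 • (Pi.single 0 1 : Fin 4 → ℝ) + T4 • (Pi.single 1 1 : Fin 4 → ℝ)) ∧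
    (engelBr T3 T4 T6 ((Pi.single 1 1 : Fin 4 → ℝ)) ((Pi.single 3 1 : Fin 4 → ℝ)) = T4 • (Pi.single 2 1 : Fin 4 → ℝ)) ∧
    (engelBr T3 T4 T6 ((Pi.single 2 1 : Fin 4 → ℝ)) ((Pi.single 3 1 : Fin 4 → ℝ))
      = (-(T6 * T3)) • (Pi.single 0 1 : Fin 4 → ℝ) + (-(T4 * T3)) • (Pi.single 1 1 : Fin 4 → ℝ) + T4 • (Pi.single 3 1 : Fin 4 → ℝ)) ∧
    (∀ v : Fin 4 → ℝ, engelBr T3 T4 T6 v v = 0) ∧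
    (∀ u v w : Fin 4 → ℝ,
      engelBr T3 T4 T6 u (engelBr T3 T4 T6 v w)
        = engelBr T3 T4 T6 (engelBr T3 T4 T6 u v) w
          + engelBr T3 T4 T6 v (engelBr T3 T4 T6 u w)) := by
  refine ⟨?_, ?_, ?_, ?_, ?_, ?_, ?_, ?_⟩
  · funext k; fin_cases k <;>
      simp [engelBr_apply0, engelBr_apply1, engelBr_apply2, engelBr_apply3, Pi.single_apply]
  · funext k; fin_cases k <;>
      simp [engelBr_apply0, engelBr_apply1, engelBr_apply2, engelBr_apply3, Pi.single_apply]
  · funext k; fin_cases k <;>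
      simp [engelBr_apply0, engelBr_apply1, engelBr_apply2, engelBr_apply3, Pi.single_apply]
  · funext k; fin_cases k <;>
      simp [engelBr_apply0, engelBr_apply1, engelBr_apply2, engelBr_apply3, Pi.single_apply]
  · funext k; fin_cases k <;>
      simp [engelBr_apply0, engelBr_apply1, engelBr_apply2, engelBr_apply3, Pi.single_apply]
  · funext k; fin_cases k <;>
      simp [engelBr_apply0, engelBr_apply1, engelBr_apply2, engelBr_apply3, Pi.single_apply]
  · intro v; funext k; fin_cases k <;>
      simp [engelBr_apply0, engelBr_apply1, engelBr_apply2, engelBr_apply3] <;> ring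
  · intro u v w; funext k
    simpa using engel_jac T3 T4 T6 u v w k
end

section
/- In the 4-dimensional Lie algebra with basis X1, X2, X3, X4 and brackets [X1,X2] = X3, [X1,X3] = X4, [X1,X4] = T3·X3, [X2,X3] = T6·X1 + T4·X2, [X2,X4] = T4·X3, [X3,X4] = −T6·T3·X1 − T4·T3·X2 + T4·X4, the element X4' = X4 + T4·X1 − T3·X2 is central, i.e. [X4', Y] = 0 for all Y in the algebra. -/
/-! Since `ad` is linear, an element is central as soon as it commutes with a basis; for
`X4 + T4 • X1 - T3 • X2` the four brackets with `X1, …, X4` vanish by expanding them with the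
structure constants and antisymmetry. -/

theorem Module.Basis.lie_eq_zero_of_forall_lie_basis_eq_zero {ι R L : Type*} [CommRing R]
    [LieRing L] [LieAlgebra R L] (B : Module.Basis ι R L) {x : L} (h : ∀ i, ⁅x, B i⁆ = 0)
    (y : L) : ⁅x, y⁆ = 0 := by
  have had : LieModule.toEnd R L L x = 0 := B.ext fun i => by simpa using h i
  simpa using LinearMap.congr_fun had y

section TypeIII

variable {R L : Type*} [CommRing R] [LieRing L] [LieAlgebra R L] {T3 T4 T6 : R}
  {X1 X2 X3 X4 : L}

theorem typeIII_central_lie_X1 (h12 : ⁅X1, X2⁆ = X3) (h14 : ⁅X1, X4⁆ = T3 • X3) :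
    ⁅X4 + T4 • X1 - T3 • X2, X1⁆ = 0 := by
  rw [sub_lie, add_lie, smul_lie, smul_lie, lie_self, ← lie_skew, h14, ← lie_skew, h12]
  module

theorem typeIII_central_lie_X2 (h12 : ⁅X1, X2⁆ = X3) (h24 : ⁅X2, X4⁆ = T4 • X3) :
    ⁅X4 + T4 • X1 - T3 • X2, X2⁆ = 0 := by
  rw [sub_lie, add_lie, smul_lie, smul_lie, lie_self, ← lie_skew, h24, h12]
  module

theorem typeIII_central_lie_X3 (h13 : ⁅X1, X3⁆ = X4) (h23 : ⁅X2, X3⁆ = T6 • X1 + T4 • X2)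
    (h34 : ⁅X3, X4⁆ = (-(T6 * T3)) • X1 + (-(T4 * T3)) • X2 + T4 • X4) :
    ⁅X4 + T4 • X1 - T3 • X2, X3⁆ = 0 := by
  rw [sub_lie, add_lie, smul_lie, smul_lie, ← lie_skew, h34, h13, h23]
  module

theorem typeIII_central_lie_X4 (h14 : ⁅X1, X4⁆ = T3 • X3) (h24 : ⁅X2, X4⁆ = T4 • X3) :
    ⁅X4 + T4 • X1 - T3 • X2, X4⁆ = 0 := by
  rw [sub_lie, add_lie, smul_lie, smul_lie, lie_self, h14, h24]
  module

end TypeIII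

theorem engel_type_III_central_element
    (L : Type*) [LieRing L] [LieAlgebra ℝ L]
    (T3 T4 T6 : ℝ) (X1 X2 X3 X4 : L) (B : Module.Basis (Fin 4) ℝ L)
    (hB0 : B 0 = X1) (hB1 : B 1 = X2) (hB2 : B 2 = X3) (hB3 : B 3 = X4)
    (h12 : ⁅X1, X2⁆ = X3) (h13 : ⁅X1, X3⁆ = X4)
    (h14 : ⁅X1, X4⁆ = T3 • X3)
    (h23 : ⁅X2, X3⁆ = T6 • X1 + T4 • X2)
    (h24 : ⁅X2, X4⁆ = T4 • X3)
    (h34 : ⁅X3, X4⁆ = (-(T6 * T3)) • X1 + (-(T4 * T3)) • X2 + T4 • X4) :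
    ∀ Y : L, ⁅X4 + T4 • X1 - T3 • X2, Y⁆ = 0 := by
  refine B.lie_eq_zero_of_forall_lie_basis_eq_zero fun i => ?_
  fin_cases i
  · simpa [hB0] using typeIII_central_lie_X1 (T4 := T4) h12 h14
  · simpa [hB1] using typeIII_central_lie_X2 (T3 := T3) h12 h24
  · simpa [hB2] using typeIII_central_lie_X3 h13 h23 h34
  · simpa [hB3] using typeIII_central_lie_X4 h14 h24
end

section
/- Let T3, T4, T6, c ∈ ℝ and let (h1, h2, h3) : ℝ → ℝ³ be a differentiable solution of the system ḣ1 = −h2·h3, ḣ2 = h1·h3, ḣ3 = h1·c − T4·(h1² − h2²) + (T3 + T6)·h1·h2. Then the function G(t) = h3(t)²/2 − c·h2(t) + (T3 + T6)/4·(h1(t)² − h2(t)²) + T4·h1(t)·h2(t) is constant in t. -/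
/-! The derivative of `G` along a solution is `∇G · ḣ`; substituting the system, the terms
cancel pairwise (`c h₁ h₃`, `(T₃ + T₆) h₁ h₂ h₃` and `T₄ (h₁² - h₂²) h₃`), so `G` has zero
derivative everywhere and is therefore constant on `ℝ`. -/

/-- `a` stands for `T₃ + T₆` and `b` for `T₄`. -/
noncomputable def verticalFirstIntegral (a b c x y z : ℝ) : ℝ :=
  z ^ 2 / 2 - c * y + a / 4 * (x ^ 2 - y ^ 2) + b * x * y

theorem HasDerivAt.verticalFirstIntegral {a b c t d₁ d₂ d₃ : ℝ} {h₁ h₂ h₃ : ℝ → ℝ}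
    (hd₁ : HasDerivAt h₁ d₁ t) (hd₂ : HasDerivAt h₂ d₂ t) (hd₃ : HasDerivAt h₃ d₃ t) :
    HasDerivAt (fun s => verticalFirstIntegral a b c (h₁ s) (h₂ s) (h₃ s))
      (h₃ t * d₃ - c * d₂ + a / 2 * (h₁ t * d₁ - h₂ t * d₂) + b * (d₁ * h₂ t + h₁ t * d₂)) t := by
  have h := ((((hd₃.pow 2).div_const 2).sub (hd₂.const_mul c)).add
    (((hd₁.pow 2).sub (hd₂.pow 2)).const_mul (a / 4))).add ((hd₁.const_mul b).mul hd₂)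
  exact h.congr_deriv (by push_cast; ring)

theorem verticalFirstIntegral_derivative_along_field_eq_zero (a b c x y z : ℝ) :
    z * (x * c - b * (x ^ 2 - y ^ 2) + a * x * y) - c * (x * z)
      + a / 2 * (x * -(y * z) - y * (x * z)) + b * (-(y * z) * y + x * (x * z)) = 0 := by
  ring

theorem first_integral_G_of_vertical_system
    (T3 T4 T6 c : ℝ) (h1 h2 h3 : ℝ → ℝ)
    (hd1 : ∀ t : ℝ, HasDerivAt h1 (-(h2 t * h3 t)) t)
    (hd2 : ∀ t : ℝ, HasDerivAt h2 (h1 t * h3 t) t)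
    (hd3 : ∀ t : ℝ, HasDerivAt h3
      (h1 t * c - T4 * (h1 t ^ 2 - h2 t ^ 2) + (T3 + T6) * h1 t * h2 t) t) :
    ∀ t : ℝ,
      h3 t ^ 2 / 2 - c * h2 t + (T3 + T6) / 4 * (h1 t ^ 2 - h2 t ^ 2)
          + T4 * h1 t * h2 t
        = h3 0 ^ 2 / 2 - c * h2 0 + (T3 + T6) / 4 * (h1 0 ^ 2 - h2 0 ^ 2)
          + T4 * h1 0 * h2 0 := by
  have hG : ∀ t, HasDerivAt
      (fun s => verticalFirstIntegral (T3 + T6) T4 c (h1 s) (h2 s) (h3 s)) 0 t := fun t => by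
    simpa only [verticalFirstIntegral_derivative_along_field_eq_zero] using
      (hd1 t).verticalFirstIntegral (a := T3 + T6) (b := T4) (c := c) (hd2 t) (hd3 t)
  intro t
  exact is_const_of_deriv_eq_zero (fun s => (hG s).differentiableAt) (fun s => (hG s).deriv) t 0
end
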